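/- With the setup of the marking rule, the digraph D' obtained from D by deleting all marked edges has no isolated vertices: every vertex of V is incident (as head or tail) to at least one unmarked edge, provided every vertex of D is incident to at least one edge (which holds automatically since every vertex has outdegree 1) and provided that whenever a vertex x has indegree 0 in D its outgoing edge is unmarked by convention. Precisely: for every vertex v, either the edge (v, h(v)) is unmarked, or there exists a vertex u with h(u) = v and the edge (u, v) unmarked. -/

import Mathlib

theorem not_marked_apply_of_marked {V : Type*} (h : V → V) (ξ : V → ℝ) (marked : V → Prop)
    (hmarked : ∀ x, marked x → ξ (h x) > ξ x ∧ ξ (h x) > ξ (h (h x)))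
    {u : V} (hu : marked u) : ¬ marked (h u) := fun hhu =>
  (hmarked u hu).2.asymm (hmarked (h u) hhu).1

theorem stmt_4_general {V : Type*} (h : V → V)
    (ξ : V → ℝ)
    (marked : V → Prop)
    (hmarked : ∀ x, marked x ↔
      (∃ u, h u = x) ∧ ξ (h x) > ξ x ∧ ξ (h x) > ξ (h (h x))) :
    ∀ v : V, ¬ marked v ∨ ∃ u, h u = v ∧ ¬ marked u := by
  intro v
  by_cases hv : marked v
  · obtain ⟨⟨u, rfl⟩, -⟩ := (hmarked v).mp hv
    have hξ_marked : ∀ x, marked x → ξ (h x) > ξ x ∧ ξ (h x) > ξ (h (h x)) :=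
      fun x hx => ((hmarked x).mp hx).2
    exact Or.inr ⟨u, rfl, fun hu => not_marked_apply_of_marked h ξ marked hξ_marked hu hv⟩
  · exact Or.inl hv

/-- With the marking rule (an edge `(x, h x)` is marked iff `x` has positive
indegree, `ξ (h x) > ξ x` and `ξ (h x) > ξ (h (h x))`), the digraph obtained by
deleting all marked edges has no isolated vertices: every vertex is the head or
the tail of some unmarked edge. -/
theorem stmt_4 {V : Type*} (h : V → V) (hne : ∀ x, h x ≠ x)
    (ξ : V → ℝ) (hξ : Function.Injective ξ)
    (marked : V → Prop)
    (hmarked : ∀ x, marked x ↔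
      (∃ u, h u = x) ∧ ξ (h x) > ξ x ∧ ξ (h x) > ξ (h (h x))) :
    ∀ v : V, ¬ marked v ∨ ∃ u, h u = v ∧ ¬ marked u :=
  stmt_4_general h ξ marked hmarked
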